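/- Reduction of the improbability of collapses to the modified (difference) system: Let s ∈ (0,1], N ≥ 1 and intensities a_1,…,a_N ∈ ℝ∖{0}. Suppose that for every i ∈ {1,…,N}, every T > 0 and every ρ > 0, the set of initial data Y_i = (y_{ij})_{j≠i} ∈ (B(0,ρ))^{N−1} ⊆ ℝ^{2(N−1)} for which there exist T_X ∈ [0,T] and a solution of the modified system with kernel G_s on [0,T_X) with initial datum Y_i, no collapse (all |y_{ij}(t)| > 0 and |y_{ij}(t) − y_{ik}(t)| > 0), and liminf_{t→T_X⁻} min_{j≠i} |y_{ij}(t)| = 0, has Lebesgue measure zero in ℝ^{2(N−1)}. Then the set of initial data X ∈ ℝ^{2N} leading to a collapse in finite time of the point-vortex system with kernel G_s has Lebesgue measure zero in ℝ^{2N}. -/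

import Mathlib

open Filter MeasureTheory

noncomputable section

/-- The plane `ℝ²`. -/
abbrev Plane : Type := EuclideanSpace ℝ (Fin 2)

/-- Counterclockwise rotation by `π/2`: `(v₁, v₂)^⊥ = (−v₂, v₁)`. -/
def perp (v : Plane) : Plane := WithLp.toLp 2 ![-v 1, v 0]

/-- `∇^⊥_y K(|y|) = K'(|y|) y^⊥ / |y|` for a radial kernel profile `K`. -/
def gradPerp (K : ℝ → ℝ) (y : Plane) : Plane := (deriv K ‖y‖ / ‖y‖) • perp y

/-- A solution of the point-vortex system with intensities `a`, kernel profile `G`,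
on the time interval `[0, T)`, with no collapse. -/
def IsVortexSolution (N : ℕ) (a : Fin N → ℝ) (G : ℝ → ℝ) (T : ℝ)
    (x : Fin N → ℝ → Plane) : Prop :=
  (∀ t ∈ Set.Ico (0 : ℝ) T, ∀ i j : Fin N, i ≠ j → x i t ≠ x j t) ∧
  ∀ i : Fin N, ∀ t ∈ Set.Ico (0 : ℝ) T,
    HasDerivWithinAt (x i)
      (∑ j ∈ Finset.univ.erase i, a j • gradPerp G (x i t - x j t))
      (Set.Ico 0 T) t

/-- The solution `x` collapses at time `T`:
`liminf_{t→T⁻} min_{i≠j} |x_i(t) − x_j(t)| = 0`, phrased as: for every `ε > 0`,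
arbitrarily close to `T` (from the left, inside `[0,T)`) two distinct vortices
are at distance `< ε`. -/
def CollapsesAt (N : ℕ) (x : Fin N → ℝ → Plane) (T : ℝ) : Prop :=
  ∀ ε > (0 : ℝ), ∀ t₀, 0 ≤ t₀ → t₀ < T →
    ∃ t, t₀ < t ∧ t < T ∧ ∃ i j : Fin N, i ≠ j ∧ ‖x i t - x j t‖ < ε

/-- The Euler kernel `G₁(r) = (1/(2π)) log(1/r)`, profile of the Green function of the
Laplacian on the plane. -/
def eulerKernel (r : ℝ) : ℝ := (1 / (2 * Real.pi)) * Real.log (1 / r)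

/-- The quasi-geostrophic kernels: `G₁(r) = (1/(2π)) log(1/r)` and, for `s ∈ (0,1)`,
`G_s(r) = (Γ(1−s)/(2^{2s} π Γ(s))) r^{−2(1−s)}`. -/
def sqgKernel (s : ℝ) (r : ℝ) : ℝ :=
  if s = 1 then eulerKernel r
  else (Real.Gamma (1 - s) / ((2 : ℝ) ^ (2 * s) * Real.pi * Real.Gamma s)) *
    r ^ (-(2 * (1 - s)))

/-- A solution of the modified (difference) system associated to the index `i`:
the curves `y_{ij}`, `j ≠ i`, satisfy
`y_{ij}' = (a_i + a_j) ∇^⊥K(|y_{ij}|) + Σ_{k≠i,j} a_k (∇^⊥K(|y_{ik}|) + ∇^⊥K(|y_{ij} − y_{ik}|))`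
at every time of the set `I`. -/
def IsModifiedSolutionOn (N : ℕ) (a : Fin N → ℝ) (K : ℝ → ℝ) (i : Fin N)
    (I : Set ℝ) (y : {j : Fin N // j ≠ i} → ℝ → Plane) : Prop :=
  ∀ j : {j : Fin N // j ≠ i}, ∀ t ∈ I,
    HasDerivWithinAt (y j)
      ((a i + a j.val) • gradPerp K (y j t) +
        ∑ k ∈ Finset.univ.erase j,
          a k.val • (gradPerp K (y k t) + gradPerp K (y j t - y k t)))
      I t

/-- No collapse for the modified system on the time set `I`: all the `y_{ij}` stay away
from `0` and from each other (so that all mutual distances `|x_i − x_j|` stay positive). -/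
def ModifiedNoCollapseOn (N : ℕ) (i : Fin N) (I : Set ℝ)
    (y : {j : Fin N // j ≠ i} → ℝ → Plane) : Prop :=
  (∀ j : {j : Fin N // j ≠ i}, ∀ t ∈ I, y j t ≠ 0) ∧
  (∀ j k : {j : Fin N // j ≠ i}, j ≠ k → ∀ t ∈ I, y j t ≠ y k t)

/-- The modified system collapses (with the vortex `i`) at time `T`:
`liminf_{t→T⁻} min_{j≠i} |y_{ij}(t)| = 0`. -/
def ModifiedCollapsesAt (N : ℕ) (i : Fin N)
    (y : {j : Fin N // j ≠ i} → ℝ → Plane) (T : ℝ) : Prop :=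
  ∀ ε > (0 : ℝ), ∀ t₀, 0 ≤ t₀ → t₀ < T →
    ∃ t, t₀ < t ∧ t < T ∧ ∃ j : {j : Fin N // j ≠ i}, ‖y j t‖ < ε

/-!
If two vortices collapse, then by pigeonhole over the finitely many indices some fixed `i` has
`min_{j≠i} |x_i − x_j| → 0` along a sequence of times, and the relative positions
`y_{ij} = x_i − x_j` solve the modified system associated to `i` without collapse before `T`.
So the collapsing initial data lie in a countable union, over `i` and integer bounds on `T` and
`ρ`, of preimages of the null sets of the hypothesis under the surjective linear map
`X ↦ (X_i − X_j)_{j≠i}`, and such preimages of Haar-null sets are null.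
-/

open Filter Topology Finset

theorem perp_zero : perp 0 = 0 := by
  ext j; fin_cases j <;> simp [perp]

theorem perp_neg (v : Plane) : perp (-v) = -perp v := by
  ext j; fin_cases j <;> simp [perp]

theorem gradPerp_zero (K : ℝ → ℝ) : gradPerp K 0 = 0 := by
  simp [gradPerp, perp_zero]

theorem gradPerp_neg (K : ℝ → ℝ) (y : Plane) : gradPerp K (-y) = -gradPerp K y := by
  simp [gradPerp, perp_neg]

section Velocity

variable {ι : Type*} [Fintype ι] [DecidableEq ι]

theorem sum_erase_smul_gradPerp_sub (a : ι → ℝ) (K : ℝ → ℝ) (X : ι → Plane) (i : ι) :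
    ∑ k ∈ univ.erase i, a k • gradPerp K (X i - X k) = ∑ k, a k • gradPerp K (X i - X k) :=
  sum_erase _ (by simp [gradPerp_zero])

/-- The right-hand side of the modified system at `y_{ij} = x_i − x_j` is `x_i' − x_j'`. -/
theorem modified_rhs_eq_sub (a : ι → ℝ) (K : ℝ → ℝ) (X : ι → Plane) (i : ι)
    (j : {j // j ≠ i}) :
    (a i + a j) • gradPerp K (X i - X j) +
        ∑ k ∈ univ.erase j, a k • (gradPerp K (X i - X k) + gradPerp K ((X i - X j) - (X i - X k)))
      = ∑ k ∈ univ.erase i, a k • gradPerp K (X i - X k) -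
        ∑ k ∈ univ.erase (j : ι), a k • gradPerp K (X j - X k) := by
  set f : ι → Plane := fun k => a k • (gradPerp K (X i - X k) - gradPerp K (X j - X k))
  have hsummand (k : {k // k ≠ i}) :
      a k • (gradPerp K (X i - X k) + gradPerp K ((X i - X j) - (X i - X k))) = f k := by
    rw [show (X i - X j) - (X i - X k) = -(X j - X k) by abel, gradPerp_neg, ← sub_eq_add_neg]
  have hsubtype : ∑ k : {k // k ≠ i}, f k = ∑ k, f k - f i := by
    rw [← sum_subtype (univ.erase i) (by simp), sum_erase_eq_sub (mem_univ i)]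
  rw [sum_congr rfl fun k _ => hsummand k, sum_erase_eq_sub (mem_univ j), hsubtype,
    sum_erase_smul_gradPerp_sub, sum_erase_smul_gradPerp_sub]
  simp only [f, sub_self, gradPerp_zero, sum_sub_distrib, smul_sub, smul_zero]
  rw [show X j - X i = -(X i - X j) by abel, gradPerp_neg]
  module

end Velocity

section Differences

variable {R M ι : Type*} [Semiring R] [AddCommGroup M] [Module R M]

def differencesFrom (i : ι) : (ι → M) →ₗ[R] ({j // j ≠ i} → M) :=
  LinearMap.pi fun j => LinearMap.proj (R := R) (φ := fun _ : ι => M) i - LinearMap.proj (j : ι)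

@[simp]
theorem differencesFrom_apply (i : ι) (X : ι → M) (j : {j // j ≠ i}) :
    differencesFrom (R := R) i X j = X i - X j :=
  rfl

theorem differencesFrom_surjective (i : ι) :
    Function.Surjective (differencesFrom (R := R) (M := M) i) := by
  classical
  intro Y
  refine ⟨fun k => if h : k = i then 0 else -Y ⟨k, h⟩, funext fun j => ?_⟩
  simp [dif_neg j.prop]

end Differences

theorem LinearMap.measure_preimage_null_of_surjective {𝕜 E F : Type*}
    [NontriviallyNormedField 𝕜] [CompleteSpace 𝕜]
    [NormedAddCommGroup E] [MeasurableSpace E] [BorelSpace E] [NormedSpace 𝕜 E]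
    [LocallyCompactSpace E]
    [NormedAddCommGroup F] [MeasurableSpace F] [BorelSpace F] [NormedSpace 𝕜 F]
    (μ : Measure E) (ν : Measure F) [μ.IsAddHaarMeasure] [ν.IsAddHaarMeasure]
    {L : E →ₗ[𝕜] F} (hL : Function.Surjective L) {s : Set F} (hs : ν s = 0) :
    μ (L ⁻¹' s) = 0 := by
  have : FiniteDimensional 𝕜 E := .of_locallyCompactSpace 𝕜
  obtain ⟨c, -, hc⟩ := L.exists_map_addHaar_eq_smul_addHaar μ ν hL
  exact Measure.preimage_null_of_map_null L.continuous_of_finiteDimensional.aemeasurable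
    (by simp [hc, hs])

theorem frequently_nhdsLT_iff_of_pos {T : ℝ} (hT : 0 < T) {P : ℝ → Prop} :
    (∃ᶠ t in 𝓝[<] T, P t) ↔ ∀ t₀, 0 ≤ t₀ → t₀ < T → ∃ t, t₀ < t ∧ t < T ∧ P t := by
  rw [(nhdsLT_basis T).frequently_iff]
  refine ⟨fun h t₀ _ ht₀ => ?_, fun h t₀ ht₀ => ?_⟩
  · obtain ⟨t, ⟨h₁, h₂⟩, hP⟩ := h t₀ ht₀
    exact ⟨t, h₁, h₂, hP⟩
  · obtain ⟨t, h₁, h₂, hP⟩ := h (max t₀ 0) (le_max_right _ _) (max_lt ht₀ hT)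
    exact ⟨t, ⟨(le_max_left _ _).trans_lt h₁, h₂⟩, hP⟩

theorem Filter.exists_forall_frequently_of_forall_frequently_exists {α ι : Type*} [Finite ι]
    {l : Filter α} {p : ι → α → ℝ → Prop} (hp : ∀ i t, Monotone (p i t))
    (h : ∀ ε > 0, ∃ᶠ t in l, ∃ i, p i t ε) : ∃ i, ∀ ε > 0, ∃ᶠ t in l, p i t ε := by
  by_contra! hnot
  choose ε hε hev using hnot
  obtain ⟨δ, hδε⟩ := Finite.exists_ge fun i => (⟨ε i, hε i⟩ : Set.Ioi (0 : ℝ))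
  have hfar : ∀ᶠ t in l, ∀ i, ¬p i t δ :=
    eventually_all.2 fun i => (hev i).mono fun t ht hpt => ht (hp i t (hδε i) hpt)
  exact h δ δ.2 (hfar.mono fun t ht ⟨i, hi⟩ => ht i hi)

section VortexSystem

variable {N : ℕ} {a : Fin N → ℝ} {K : ℝ → ℝ} {T : ℝ} {x : Fin N → ℝ → Plane}

theorem collapsesAt_iff_frequently (hT : 0 < T) :
    CollapsesAt N x T ↔
      ∀ ε > 0, ∃ᶠ t in 𝓝[<] T, ∃ i j : Fin N, i ≠ j ∧ ‖x i t - x j t‖ < ε := by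
  simp only [CollapsesAt, frequently_nhdsLT_iff_of_pos hT]

theorem modifiedCollapsesAt_iff_frequently (hT : 0 < T) {i : Fin N}
    {y : {j : Fin N // j ≠ i} → ℝ → Plane} :
    ModifiedCollapsesAt N i y T ↔ ∀ ε > 0, ∃ᶠ t in 𝓝[<] T, ∃ j, ‖y j t‖ < ε := by
  simp only [ModifiedCollapsesAt, frequently_nhdsLT_iff_of_pos hT]

theorem CollapsesAt.exists_modifiedCollapsesAt (hT : 0 < T) (h : CollapsesAt N x T) :
    ∃ i, ModifiedCollapsesAt N i (fun j t => x i t - x j t) T := by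
  simp only [modifiedCollapsesAt_iff_frequently hT]
  rw [collapsesAt_iff_frequently hT] at h
  refine exists_forall_frequently_of_forall_frequently_exists
    (p := fun i t ε => ∃ j : {j // j ≠ i}, ‖x i t - x j t‖ < ε)
    (fun i t ε ε' hle ⟨j, hj⟩ => ⟨j, hj.trans_le hle⟩) fun ε hε => ?_
  exact (h ε hε).mono fun t ⟨i, j, hij, hlt⟩ => ⟨i, ⟨j, hij.symm⟩, hlt⟩

theorem IsVortexSolution.isModifiedSolutionOn (hx : IsVortexSolution N a K T x) (i : Fin N) :
    IsModifiedSolutionOn N a K i (Set.Ico 0 T) (fun j t => x i t - x j t) := fun j t ht =>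
  ((hx.2 i t ht).sub (hx.2 j t ht)).congr_deriv (modified_rhs_eq_sub a K (x · t) i j).symm

theorem IsVortexSolution.modifiedNoCollapseOn (hx : IsVortexSolution N a K T x) (i : Fin N) :
    ModifiedNoCollapseOn N i (Set.Ico 0 T) (fun j t => x i t - x j t) :=
  ⟨fun j t ht => sub_ne_zero_of_ne (hx.1 t ht i j (Ne.symm j.prop)),
    fun j k hjk t ht heq => hx.1 t ht j k (Subtype.coe_ne_coe.2 hjk) (sub_right_inj.1 heq)⟩

end VortexSystem

def modifiedCollapseData (N : ℕ) (a : Fin N → ℝ) (K : ℝ → ℝ) (i : Fin N) (T ρ : ℝ) :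
    Set ({j : Fin N // j ≠ i} → Plane) :=
  {Y | (∀ j, ‖Y j‖ < ρ) ∧
    ∃ TX : ℝ, 0 ≤ TX ∧ TX ≤ T ∧
      ∃ y : {j : Fin N // j ≠ i} → ℝ → Plane,
        IsModifiedSolutionOn N a K i (Set.Ico 0 TX) y ∧
        ModifiedNoCollapseOn N i (Set.Ico 0 TX) y ∧
        (∀ j, y j 0 = Y j) ∧ ModifiedCollapsesAt N i y TX}

theorem collapse_reduction_to_modified_system_general
    (s : ℝ)
    (N : ℕ) (a : Fin N → ℝ)
    (hyp : ∀ i : Fin N, ∀ T : ℝ, 0 < T → ∀ ρ : ℝ, 0 < ρ →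
      volume {Y : {j : Fin N // j ≠ i} → Plane |
        (∀ j, ‖Y j‖ < ρ) ∧
        ∃ TX : ℝ, 0 ≤ TX ∧ TX ≤ T ∧
          ∃ y : {j : Fin N // j ≠ i} → ℝ → Plane,
            IsModifiedSolutionOn N a (sqgKernel s) i (Set.Ico 0 TX) y ∧
            ModifiedNoCollapseOn N i (Set.Ico 0 TX) y ∧
            (∀ j, y j 0 = Y j) ∧ ModifiedCollapsesAt N i y TX} = 0) :
    volume {X : Fin N → Plane |
      (∀ i j : Fin N, i ≠ j → X i ≠ X j) ∧
      ∃ T : ℝ, 0 < T ∧ ∃ x : Fin N → ℝ → Plane,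
        IsVortexSolution N a (sqgKernel s) T x ∧ (∀ i, x i 0 = X i) ∧
        CollapsesAt N x T} = 0 := by
  have hnull (i : Fin N) (n : ℕ) : volume (differencesFrom (R := ℝ) i ⁻¹'
      modifiedCollapseData N a (sqgKernel s) i (n + 1) (n + 1)) = 0 :=
    LinearMap.measure_preimage_null_of_surjective _ _ (differencesFrom_surjective i)
      (hyp i _ n.cast_add_one_pos _ n.cast_add_one_pos)
  refine measure_mono_null ?_ (measure_iUnion_null fun i => measure_iUnion_null (hnull i))
  rintro X ⟨-, T, hT, x, hsol, hx0, hcol⟩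
  obtain ⟨i, hcol_i⟩ := hcol.exists_modifiedCollapsesAt hT
  obtain ⟨n, hn⟩ := exists_nat_ge (max T ‖differencesFrom (R := ℝ) i X‖)
  have hnorm (j) : ‖differencesFrom (R := ℝ) i X j‖ < n + 1 :=
    ((norm_le_pi_norm _ j).trans (le_of_max_le_right hn)).trans_lt (lt_add_one _)
  simp only [Set.mem_iUnion]
  refine ⟨i, n, hnorm, T, hT.le, (le_of_max_le_left hn).trans (by simp), _,
    hsol.isModifiedSolutionOn i, hsol.modifiedNoCollapseOn i, fun j => by simp [hx0], hcol_i⟩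

/-- Reduction of the improbability of collapses to the modified (difference) system:
if for every `i`, `T > 0` and `ρ > 0` the set of initial data in `(B(0,ρ))^{N−1}` leading
to a collapse of the modified system has Lebesgue measure zero in `ℝ^{2(N−1)}`, then the
set of initial data leading to a collapse in finite time of the point-vortex system with
kernel `G_s` has Lebesgue measure zero in `ℝ^{2N}`. -/
theorem collapse_reduction_to_modified_system
    (s : ℝ) (hs : 0 < s) (hs1 : s ≤ 1)
    (N : ℕ) (hN : 1 ≤ N) (a : Fin N → ℝ) (ha : ∀ i, a i ≠ 0)
    (hyp : ∀ i : Fin N, ∀ T : ℝ, 0 < T → ∀ ρ : ℝ, 0 < ρ →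
      volume {Y : {j : Fin N // j ≠ i} → Plane |
        (∀ j, ‖Y j‖ < ρ) ∧
        ∃ TX : ℝ, 0 ≤ TX ∧ TX ≤ T ∧
          ∃ y : {j : Fin N // j ≠ i} → ℝ → Plane,
            IsModifiedSolutionOn N a (sqgKernel s) i (Set.Ico 0 TX) y ∧
            ModifiedNoCollapseOn N i (Set.Ico 0 TX) y ∧
            (∀ j, y j 0 = Y j) ∧ ModifiedCollapsesAt N i y TX} = 0) :
    volume {X : Fin N → Plane |
      (∀ i j : Fin N, i ≠ j → X i ≠ X j) ∧
      ∃ T : ℝ, 0 < T ∧ ∃ x : Fin N → ℝ → Plane,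
        IsVortexSolution N a (sqgKernel s) T x ∧ (∀ i, x i 0 = X i) ∧
        CollapsesAt N x T} = 0 :=
  collapse_reduction_to_modified_system_general s N a hyp
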